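/- Let $A \in \mathbb{R}^{n \times n}$ and $\bar t \in [0,1)$. Suppose $\xi', \eta', \zeta' \in \mathbb{R}^n$ are componentwise nonnegative and satisfy $(1-\bar t)(A + A^T)\xi' - (1-\bar t)^2 \eta' - (1-\bar t)^2 A^T \zeta' + \bar t \xi' = 0$, $\xi'_i \eta'_i + \xi'_i (A\xi')_i = 0$ for all $i$, and $\zeta'_i (A\xi')_i = 0$ for all $i$. Then $(\xi')^T A \xi' = -\frac{\bar t}{(1-\bar t)(3-\bar t)} (\xi')^T \xi' \leq 0$. -/

import Mathlib

/-!
Pair the stationarity equation with `ξ'`. We have `ξ'ᵀ(A + Aᵀ)ξ' = 2 ξ'ᵀAξ'`, the first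
complementarity condition gives `ξ'ᵀη' = -ξ'ᵀAξ'`, and the second gives `ξ'ᵀAᵀζ' = ζ'ᵀAξ' = 0`,
so the equation collapses to `(1 - t̄)(3 - t̄) ξ'ᵀAξ' + t̄ ξ'ᵀξ' = 0`. For `t̄ ∈ [0, 1)` the
coefficient `(1 - t̄)(3 - t̄)` is positive, which yields the formula and its sign.
-/

open Matrix BigOperators

namespace Matrix

variable {m R : Type*} [Fintype m]

theorem dotProduct_eq_neg_of_forall_mul_add_mul_eq_zero [CommRing R] {x y z : m → R}
    (h : ∀ i, x i * y i + x i * z i = 0) : x ⬝ᵥ y = -(x ⬝ᵥ z) := by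
  rw [eq_neg_iff_add_eq_zero, dotProduct, dotProduct, ← Finset.sum_add_distrib]
  exact Finset.sum_eq_zero fun i _ => h i

theorem dotProduct_transpose_mulVec_eq_zero [CommSemiring R] {A : Matrix m m R}
    {x z : m → R} (h : ∀ i, z i * (A *ᵥ x) i = 0) : x ⬝ᵥ (Aᵀ *ᵥ z) = 0 := by
  rw [dotProduct_transpose_mulVec]
  exact Finset.sum_eq_zero fun i _ => h i

theorem dotProduct_add_transpose_mulVec_self [CommSemiring R] (A : Matrix m m R) (x : m → R) :
    x ⬝ᵥ ((A + Aᵀ) *ᵥ x) = 2 * (x ⬝ᵥ (A *ᵥ x)) := by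
  rw [add_mulVec, dotProduct_add, dotProduct_transpose_mulVec, two_mul]

theorem mul_dotProduct_mulVec_add_mul_dotProduct_self_eq_zero [CommRing R]
    (A : Matrix m m R) (t : R) {ξ η ζ : m → R}
    (heq : (1 - t) • ((A + Aᵀ) *ᵥ ξ) - (1 - t) ^ 2 • η - (1 - t) ^ 2 • (Aᵀ *ᵥ ζ) + t • ξ = 0)
    (hcomp1 : ∀ i, ξ i * η i + ξ i * (A *ᵥ ξ) i = 0)
    (hcomp2 : ∀ i, ζ i * (A *ᵥ ξ) i = 0) :
    (1 - t) * (3 - t) * (ξ ⬝ᵥ (A *ᵥ ξ)) + t * (ξ ⬝ᵥ ξ) = 0 := by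
  have h := congrArg (ξ ⬝ᵥ ·) heq
  simp only [dotProduct_add, dotProduct_sub, dotProduct_smul, dotProduct_zero, smul_eq_mul,
    dotProduct_add_transpose_mulVec_self, dotProduct_eq_neg_of_forall_mul_add_mul_eq_zero hcomp1,
    dotProduct_transpose_mulVec_eq_zero hcomp2] at h
  linear_combination h

end Matrix

theorem stmt4_general (n : ℕ) (A : Matrix (Fin n) (Fin n) ℝ)
    (tbar : ℝ) (ht : tbar ∈ Set.Ico (0:ℝ) 1)
    (ξ' η' ζ' : Fin n → ℝ)
    (heq : (1 - tbar) • ((A + Aᵀ) *ᵥ ξ') - (1 - tbar)^2 • η'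
      - (1 - tbar)^2 • (Aᵀ *ᵥ ζ') + tbar • ξ' = 0)
    (hcomp1 : ∀ i, ξ' i * η' i + ξ' i * (A *ᵥ ξ') i = 0)
    (hcomp2 : ∀ i, ζ' i * (A *ᵥ ξ') i = 0) :
    ξ' ⬝ᵥ (A *ᵥ ξ') = -(tbar / ((1 - tbar) * (3 - tbar))) * (ξ' ⬝ᵥ ξ') ∧
    ξ' ⬝ᵥ (A *ᵥ ξ') ≤ 0 := by
  obtain ⟨ht0, ht1⟩ := ht
  have hkey := mul_dotProduct_mulVec_add_mul_dotProduct_self_eq_zero A tbar heq hcomp1 hcomp2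
  have hcoeff : 0 < (1 - tbar) * (3 - tbar) := by nlinarith
  have hformula : ξ' ⬝ᵥ (A *ᵥ ξ') = -(tbar / ((1 - tbar) * (3 - tbar))) * (ξ' ⬝ᵥ ξ') := by
    rw [neg_mul, div_mul_eq_mul_div, eq_neg_iff_add_eq_zero, add_div' _ _ _ hcoeff.ne',
      div_eq_zero_iff]
    exact Or.inl (by linear_combination hkey)
  have hself : 0 ≤ ξ' ⬝ᵥ ξ' := Finset.sum_nonneg fun i _ => mul_self_nonneg (ξ' i)
  refine ⟨hformula, ?_⟩
  rw [hformula, neg_mul]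
  exact neg_nonpos.mpr (mul_nonneg (div_nonneg ht0 hcoeff.le) hself)

theorem stmt4 (n : ℕ) (A : Matrix (Fin n) (Fin n) ℝ)
    (tbar : ℝ) (ht : tbar ∈ Set.Ico (0:ℝ) 1)
    (ξ' η' ζ' : Fin n → ℝ)
    (hξ : ∀ i, 0 ≤ ξ' i) (hη : ∀ i, 0 ≤ η' i) (hζ : ∀ i, 0 ≤ ζ' i)
    (heq : (1 - tbar) • ((A + Aᵀ) *ᵥ ξ') - (1 - tbar)^2 • η'
      - (1 - tbar)^2 • (Aᵀ *ᵥ ζ') + tbar • ξ' = 0)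
    (hcomp1 : ∀ i, ξ' i * η' i + ξ' i * (A *ᵥ ξ') i = 0)
    (hcomp2 : ∀ i, ζ' i * (A *ᵥ ξ') i = 0) :
    ξ' ⬝ᵥ (A *ᵥ ξ') = -(tbar / ((1 - tbar) * (3 - tbar))) * (ξ' ⬝ᵥ ξ') ∧
    ξ' ⬝ᵥ (A *ᵥ ξ') ≤ 0 :=
  stmt4_general n A tbar ht ξ' η' ζ' heq hcomp1 hcomp2
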